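/- arXiv:1808.10233 — 2 statements merged into one kernel-verified Lean document; each statement's English description precedes it below -/
import Mathlib

section
/- Let G be a Carnot group of step 2 identified with ℝ^n = ℝ^{m1} × ℝ^{m2}, let R > 0 and p, q ∈ B_E(0,R) with q¹ = p¹ (i.e. q lies on the vertical fiber L(p) = {[u¹,u²] : u¹ = p¹}). If there exist ρ > 0 and a point s ∈ V(p) ∩ B_E(0,R) with d_E(q,s) ≤ ρ, then |q² − p²| ≤ (c_R/c)² ρ. -/
open MeasureTheory Metric Filter Set Topology

noncomputable section

/-- A Carnot group of step 2, identified via exponential coordinates with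
`ℝ^n = ℝ^{m1} × ℝ^{m2}` endowed with the Euclidean metric. -/
abbrev Carnot2 (m1 m2 : ℕ) := EuclideanSpace ℝ (Fin (m1 + m2))

/-- The first-layer (horizontal) component of a point. -/
def layer1 {m1 m2 : ℕ} (p : Carnot2 m1 m2) : EuclideanSpace ℝ (Fin m1) :=
  WithLp.toLp 2 (fun i => p (Fin.castAdd m2 i))

/-- The second-layer (vertical) component of a point. -/
def layer2 {m1 m2 : ℕ} (p : Carnot2 m1 m2) : EuclideanSpace ℝ (Fin m2) :=
  WithLp.toLp 2 (fun j => p (Fin.natAdd m1 j))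

/-- The antisymmetric bilinear map `P` with components
`P_j(x,y) = Σ_{l<i} b^j_{l,i} (x_l y_i - x_i y_l)`. -/
def Pmap {m1 m2 : ℕ} (b : Fin m2 → Fin m1 → Fin m1 → ℝ)
    (x y : EuclideanSpace ℝ (Fin m1)) : EuclideanSpace ℝ (Fin m2) :=
  WithLp.toLp 2 (fun j => ∑ l : Fin m1, ∑ i : Fin m1,
    if (l : ℕ) < (i : ℕ) then b j l i * (x l * y i - x i * y l) else 0)

/-- The homogeneous distance
`d_∞(p,q) = max { |p¹-q¹| , c |p²-q²+P(p¹,q¹)|^{1/2} }`. -/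
def dInf {m1 m2 : ℕ} (c : ℝ) (b : Fin m2 → Fin m1 → Fin m1 → ℝ)
    (p q : Carnot2 m1 m2) : ℝ :=
  max (dist (layer1 p) (layer1 q))
    (c * Real.sqrt ‖layer2 p - layer2 q + Pmap b (layer1 p) (layer1 q)‖)

/-- The horizontal `m1`-plane `V(p) = {q : q² = p² + P(p¹,q¹)}` through `p`. -/
def horizPlane {m1 m2 : ℕ} (b : Fin m2 → Fin m1 → Fin m1 → ℝ)
    (p : Carnot2 m1 m2) : Set (Carnot2 m1 m2) :=
  {q | layer2 q = layer2 p + Pmap b (layer1 p) (layer1 q)}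

/-- `V(p)(δ)`: the closed Euclidean `δ`-neighbourhood of the horizontal plane `V(p)`. -/
def horizNbhd {m1 m2 : ℕ} (b : Fin m2 → Fin m1 → Fin m1 → ℝ)
    (p : Carnot2 m1 m2) (δ : ℝ) : Set (Carnot2 m1 m2) :=
  {q | Metric.infDist q (horizPlane b p) ≤ δ}

/-- The `s`-dimensional Hausdorff measure with respect to the homogeneous metric `minf`. -/
def HMeasG {m1 m2 : ℕ} (minf : MetricSpace (Carnot2 m1 m2))
    (hB : @BorelSpace (Carnot2 m1 m2) minf.toUniformSpace.toTopologicalSpace _)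
    (s : ℝ) : Measure (Carnot2 m1 m2) :=
  @MeasureTheory.Measure.hausdorffMeasure _ minf.toEMetricSpace _ hB s


/-- Points on the vertical fiber `L(p)` that are Euclidean `ρ`-close to a point
of `V(p)` inside `B_E(0,R)` satisfy `|q² − p²| ≤ (c_R/c)² ρ`. -/
theorem statement8 (m1 m2 : ℕ) (hm1 : 1 ≤ m1) (hm2 : 1 ≤ m2)
    (b : Fin m2 → Fin m1 → Fin m1 → ℝ)
    (c : ℝ) (hc0 : 0 < c) (hc1 : c < 1)
    (minf : MetricSpace (Carnot2 m1 m2))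
    (hmdist : ∀ p q, minf.dist p q = dInf c b p q)
    (R : ℝ) (hR : 0 < R) (cR : ℝ) (hcR : 0 < cR)
    (hcomp : ∀ p q : Carnot2 m1 m2,
      p ∈ Metric.closedBall (0 : Carnot2 m1 m2) R →
      q ∈ Metric.closedBall (0 : Carnot2 m1 m2) R →
      (1 / cR) * dist p q ≤ dInf c b p q ∧ dInf c b p q ≤ cR * Real.sqrt (dist p q))
    (p q : Carnot2 m1 m2)
    (hp : p ∈ Metric.closedBall (0 : Carnot2 m1 m2) R)
    (hq : q ∈ Metric.closedBall (0 : Carnot2 m1 m2) R)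
    (hfiber : layer1 q = layer1 p)
    (ρ : ℝ) (hρ : 0 < ρ) (s : Carnot2 m1 m2) (hs : s ∈ horizPlane b p)
    (hsR : s ∈ Metric.closedBall (0 : Carnot2 m1 m2) R)
    (hqs : dist q s ≤ ρ) :
    ‖layer2 q - layer2 p‖ ≤ (cR / c) ^ 2 * ρ := by
  have hkey : layer2 q - layer2 s + Pmap b (layer1 q) (layer1 s)
      = layer2 q - layer2 p := by
    rw [hfiber, hs]
    abel
  have h1 : c * Real.sqrt ‖layer2 q - layer2 p‖ ≤ dInf c b q s := by
    rw [← hkey]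
    exact le_max_right _ _
  have h2 : dInf c b q s ≤ cR * Real.sqrt (dist q s) :=
    (hcomp q s hq hsR).2
  have h3 : Real.sqrt (dist q s) ≤ Real.sqrt ρ := Real.sqrt_le_sqrt hqs
  have h4 : c * Real.sqrt ‖layer2 q - layer2 p‖ ≤ cR * Real.sqrt ρ := by
    calc c * Real.sqrt ‖layer2 q - layer2 p‖ ≤ cR * Real.sqrt (dist q s) :=
          h1.trans h2
      _ ≤ cR * Real.sqrt ρ := by nlinarith [Real.sqrt_nonneg (dist q s)]
  have h5 : Real.sqrt ‖layer2 q - layer2 p‖ ≤ (cR / c) * Real.sqrt ρ := by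
    rw [div_mul_eq_mul_div, le_div_iff₀ hc0]
    nlinarith
  have h6 : ‖layer2 q - layer2 p‖ ≤ ((cR / c) * Real.sqrt ρ) ^ 2 := by
    have := Real.sq_sqrt (norm_nonneg (layer2 q - layer2 p))
    nlinarith [Real.sqrt_nonneg ‖layer2 q - layer2 p‖, Real.sqrt_nonneg ρ,
      mul_nonneg (div_nonneg hcR.le hc0.le) (Real.sqrt_nonneg ρ)]
  calc ‖layer2 q - layer2 p‖ ≤ ((cR / c) * Real.sqrt ρ) ^ 2 := h6
    _ = (cR / c) ^ 2 * ρ := by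
        rw [mul_pow, Real.sq_sqrt hρ.le]
end
end

section
/- Let G be a Carnot group of step 2 identified with ℝ^n = ℝ^{m1} × ℝ^{m2}, let R > 0, p ∈ B_E(0,R), and 0 < r < δ < 1. Then the diameter of B_E(p,r) ∩ V(p)(δr) with respect to the homogeneous metric satisfies diam_∞( B_E(p,r) ∩ V(p)(δr) ) ≤ 2(c_{R'} + 2)(δr)^{1/2}, where c_{R'} is a metric comparison constant valid on a Euclidean ball B_E(0,R') large enough to contain B_E(p,r) ∩ V(p)(δr) together with Euclidean δr-approximating points on V(p) (e.g. R' = R + 2). -/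
open MeasureTheory Metric Filter Set Topology

noncomputable section

lemma layer1_dist_le {m1 m2 : ℕ} (p q : Carnot2 m1 m2) :
    dist (layer1 p) (layer1 q) ≤ dist p q := by
  rw [EuclideanSpace.dist_eq, EuclideanSpace.dist_eq]
  apply Real.sqrt_le_sqrt
  rw [Fin.sum_univ_add]
  have : ∀ i : Fin m1, dist (layer1 p i) (layer1 q i) ^ 2
      = dist (p (Fin.castAdd m2 i)) (q (Fin.castAdd m2 i)) ^ 2 := fun i => rfl
  simp only [this]
  exact le_add_of_nonneg_right (Finset.sum_nonneg fun i _ => sq_nonneg _)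

lemma Pmap_self {m1 m2 : ℕ} (b : Fin m2 → Fin m1 → Fin m1 → ℝ)
    (x : EuclideanSpace ℝ (Fin m1)) : Pmap b x x = 0 := by
  ext j
  show (∑ l : Fin m1, ∑ i : Fin m1,
    if (l : ℕ) < (i : ℕ) then b j l i * (x l * x i - x i * x l) else 0) = 0
  apply Finset.sum_eq_zero; intro l _
  apply Finset.sum_eq_zero; intro i _
  split <;> ring

lemma horizPlane_closed {m1 m2 : ℕ} (b : Fin m2 → Fin m1 → Fin m1 → ℝ)
    (p : Carnot2 m1 m2) : IsClosed (horizPlane b p) := by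
  have heq : horizPlane b p = ⋂ j : Fin m2,
      {q : Carnot2 m1 m2 | layer2 q j = layer2 p j + Pmap b (layer1 p) (layer1 q) j} := by
    ext q
    simp only [horizPlane, Set.mem_setOf_eq, Set.mem_iInter]
    exact ⟨fun h j => by simp [h], fun h => PiLp.ext fun j => by simp [h]⟩
  rw [heq]
  refine isClosed_iInter fun j => isClosed_eq ?_ ?_
  · exact PiLp.continuous_apply 2 _ (Fin.natAdd m1 j)
  · show Continuous fun q : Carnot2 m1 m2 => layer2 p j + ∑ l : Fin m1, ∑ i : Fin m1,
      if (l : ℕ) < (i : ℕ) then b j l i * (layer1 p l * layer1 q i - layer1 p i * layer1 q l) else 0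
    refine continuous_const.add ?_
    refine continuous_finset_sum _ fun l _ => continuous_finset_sum _ fun i _ => ?_
    by_cases h : (l : ℕ) < (i : ℕ)
    · simp only [h, if_true]
      refine continuous_const.mul (Continuous.sub ?_ ?_)
      · exact continuous_const.mul (PiLp.continuous_apply 2 _ (Fin.castAdd m2 i))
      · exact continuous_const.mul (PiLp.continuous_apply 2 _ (Fin.castAdd m2 l))
    · simp only [h, if_false]; exact continuous_const

lemma dInf_of_mem_plane {m1 m2 : ℕ} (c : ℝ) (hc : 0 ≤ c)
    (b : Fin m2 → Fin m1 → Fin m1 → ℝ) (p q : Carnot2 m1 m2)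
    (hq : q ∈ horizPlane b p) :
    dInf c b p q = dist (layer1 p) (layer1 q) := by
  have h0 : layer2 p - layer2 q + Pmap b (layer1 p) (layer1 q) = 0 := by
    rw [hq]; abel
  rw [dInf, h0]
  simp [dist_nonneg]

/-- Diameter estimate (equation (22) of the paper):
`diam_∞(B_E(p,r) ∩ V(p)(δr)) ≤ 2(c_{R'} + 2)(δr)^{1/2}` for `p ∈ B_E(0,R)` and
`0 < r < δ < 1`, where `c_{R'}` is a comparison constant valid on `B_E(0, R+2)`. -/
theorem statement10 (m1 m2 : ℕ) (hm1 : 1 ≤ m1) (hm2 : 1 ≤ m2)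
    (b : Fin m2 → Fin m1 → Fin m1 → ℝ)
    (c : ℝ) (hc0 : 0 < c) (hc1 : c < 1)
    (minf : MetricSpace (Carnot2 m1 m2))
    (hmdist : ∀ p q, minf.dist p q = dInf c b p q)
    (R : ℝ) (hR : 0 < R) (cR' : ℝ) (hcR' : 0 < cR')
    (hcomp : ∀ p q : Carnot2 m1 m2,
      p ∈ Metric.closedBall (0 : Carnot2 m1 m2) (R + 2) →
      q ∈ Metric.closedBall (0 : Carnot2 m1 m2) (R + 2) →
      (1 / cR') * dist p q ≤ dInf c b p q ∧ dInf c b p q ≤ cR' * Real.sqrt (dist p q))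
    (p : Carnot2 m1 m2) (hp : p ∈ Metric.closedBall (0 : Carnot2 m1 m2) R)
    (r δ : ℝ) (hr0 : 0 < r) (hrδ : r < δ) (hδ : δ < 1) :
    @Metric.diam _ minf.toPseudoMetricSpace
        (Metric.closedBall p r ∩ horizNbhd b p (δ * r)) ≤
      2 * (cR' + 2) * Real.sqrt (δ * r) := by
  set S := Metric.closedBall p r ∩ horizNbhd b p (δ * r) with hS
  have hδr0 : 0 < δ * r := mul_pos (lt_trans hr0 hrδ) hr0
  have hr1 : r < 1 := lt_trans hrδ hδ
  have hδr1 : δ * r ≤ 1 :=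
    le_of_lt (by nlinarith)
  have hsq : Real.sqrt (δ * r) ≥ 0 := Real.sqrt_nonneg _
  have hrle : r ≤ Real.sqrt (δ * r) := by
    have h1 : Real.sqrt (r * r) ≤ Real.sqrt (δ * r) := Real.sqrt_le_sqrt (by nlinarith)
    rwa [Real.sqrt_mul_self hr0.le] at h1
  have hδrle : δ * r ≤ Real.sqrt (δ * r) := by
    have h1 : Real.sqrt ((δ * r) * (δ * r)) ≤ Real.sqrt (δ * r) := Real.sqrt_le_sqrt (by nlinarith)
    rwa [Real.sqrt_mul_self hδr0.le] at h1
  have hpP : p ∈ horizPlane b p := by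
    show layer2 p = layer2 p + Pmap b (layer1 p) (layer1 p)
    rw [Pmap_self]; abel
  have hpball : p ∈ Metric.closedBall (0 : Carnot2 m1 m2) (R + 2) := by
    rw [Metric.mem_closedBall] at hp ⊢; linarith
  -- main estimate for a single point in S
  have key : ∀ q ∈ S, ∃ q' : Carnot2 m1 m2,
      minf.dist q q' ≤ cR' * Real.sqrt (δ * r) ∧
      minf.dist p q' ≤ 2 * Real.sqrt (δ * r) := by
    intro q hq
    obtain ⟨hq1, hq2⟩ := hq
    rw [Metric.mem_closedBall] at hq1
    obtain ⟨q', hq'mem, hq'dist⟩ :=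
      (horizPlane_closed b p).exists_infDist_eq_dist ⟨p, hpP⟩ q
    have hdqq' : dist q q' ≤ δ * r := by rw [← hq'dist]; exact hq2
    have hqball : q ∈ Metric.closedBall (0 : Carnot2 m1 m2) (R + 2) := by
      rw [Metric.mem_closedBall] at hp ⊢
      calc dist q 0 ≤ dist q p + dist p 0 := dist_triangle _ _ _
        _ ≤ R + 2 := by linarith
    have hq'ball : q' ∈ Metric.closedBall (0 : Carnot2 m1 m2) (R + 2) := by
      rw [Metric.mem_closedBall] at hp ⊢
      calc dist q' 0 ≤ dist q' q + (dist q p + dist p 0) :=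
            le_trans (dist_triangle _ _ _) (by gcongr; exact dist_triangle _ _ _)
        _ ≤ R + 2 := by rw [dist_comm q' q]; nlinarith
    refine ⟨q', ?_, ?_⟩
    · rw [hmdist]
      calc dInf c b q q' ≤ cR' * Real.sqrt (dist q q') := (hcomp q q' hqball hq'ball).2
        _ ≤ cR' * Real.sqrt (δ * r) :=
            mul_le_mul_of_nonneg_left (Real.sqrt_le_sqrt hdqq') hcR'.le
    · rw [hmdist, dInf_of_mem_plane c hc0.le b p q' hq'mem]
      calc dist (layer1 p) (layer1 q') ≤ dist p q' := layer1_dist_le p q'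
        _ ≤ dist p q + dist q q' := dist_triangle _ _ _
        _ ≤ r + δ * r := by rw [dist_comm p q]; linarith
        _ ≤ 2 * Real.sqrt (δ * r) := by linarith
  refine @Metric.diam_le_of_forall_dist_le _ _ minf.toPseudoMetricSpace _ (by positivity) ?_
  intro x hx y hy
  obtain ⟨x', hx1, hx2⟩ := key x hx
  obtain ⟨y', hy1, hy2⟩ := key y hy
  have t1 : minf.dist x y ≤ minf.dist x x' + minf.dist x' y :=
    @dist_triangle _ minf.toPseudoMetricSpace x x' y
  have t2 : minf.dist x' y ≤ minf.dist x' p + minf.dist p y :=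
    @dist_triangle _ minf.toPseudoMetricSpace x' p y
  have t3 : minf.dist p y ≤ minf.dist p y' + minf.dist y' y :=
    @dist_triangle _ minf.toPseudoMetricSpace p y' y
  have hx2' : minf.dist x' p ≤ 2 * Real.sqrt (δ * r) :=
    le_trans (le_of_eq (@dist_comm _ minf.toPseudoMetricSpace x' p)) hx2
  have hy1' : minf.dist y' y ≤ cR' * Real.sqrt (δ * r) :=
    le_trans (le_of_eq (@dist_comm _ minf.toPseudoMetricSpace y' y)) hy1
  show minf.dist x y ≤ _
  calc minf.dist x y
      ≤ cR' * Real.sqrt (δ * r) + 2 * Real.sqrt (δ * r)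
        + (2 * Real.sqrt (δ * r) + cR' * Real.sqrt (δ * r)) := by linarith
    _ = 2 * (cR' + 2) * Real.sqrt (δ * r) := by ring
end
end
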